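/- arXiv:2403.19878 — 7 statements merged into one kernel-verified Lean document; each statement's English description precedes it below -/
import Mathlib

section
/- Let P, P', Q, Q' and X be points of the Euclidean plane ℝ² (or any real inner product space) such that X lies on the segment [P, P'] and also on the segment [Q, Q']. Then dist(P,P') + dist(Q,Q') ≥ dist(P,Q) + dist(P',Q'). Moreover, if in addition X does not lie on the segment [P, Q], then the inequality is strict: dist(P,P') + dist(Q,Q') > dist(P,Q) + dist(P',Q'). -/
/-- Uncrossing two crossing segments does not increase total length: if `X` lies
on both segments `[P, P']` and `[Q, Q']`, then
`dist P P' + dist Q Q' ≥ dist P Q + dist P' Q'`; moreover the inequality is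
strict when `X` does not lie on the segment `[P, Q]`. -/
theorem uncross_segments {E : Type*} [NormedAddCommGroup E] [InnerProductSpace ℝ E]
    (P P' Q Q' X : E) (hX1 : X ∈ segment ℝ P P') (hX2 : X ∈ segment ℝ Q Q') :
    dist P P' + dist Q Q' ≥ dist P Q + dist P' Q' ∧
      (X ∉ segment ℝ P Q → dist P P' + dist Q Q' > dist P Q + dist P' Q') := by
  have h1 := dist_add_dist_of_mem_segment hX1
  have h2 := dist_add_dist_of_mem_segment hX2
  have t1 : dist P Q ≤ dist P X + dist X Q := dist_triangle _ _ _
  have t2 : dist P' Q' ≤ dist P' X + dist X Q' := dist_triangle _ _ _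
  have e1 : dist P' X = dist X P' := dist_comm _ _
  have e2 : dist X Q = dist Q X := dist_comm _ _
  constructor
  · linarith
  · intro hX
    have hne : dist P Q ≠ dist P X + dist X Q := by
      intro h
      exact hX ((mem_segment_iff_wbtw).2 ((dist_add_dist_eq_iff).1 h.symm))
    have : dist P Q < dist P X + dist X Q := lt_of_le_of_ne t1 hne
    linarith
end

section
/- For every p ∈ [0,1) there exist α > 0 and n₀ ∈ ℕ such that for all even n ≥ n₀, if S_n is a binomial random variable with n/2 trials and success probability p_n = (α/2)·n^{−1/2}, then E[(1 − α²/(4n))^{S_n(S_n−1)/2}] < 1 − p. -/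
private lemma aux_nat_ineq (T k : ℕ) : T * k ≤ k * (k - 1) / 2 + T * T := by
  rcases k with _ | j
  · simp
  · have hev : 2 ∣ (j + 1) * j := by
      simpa [mul_comm] using (Nat.even_mul_succ_self j).two_dvd
    have h2 : (j + 1) * ((j + 1) - 1) / 2 * 2 = (j + 1) * j := by
      simpa using Nat.div_mul_cancel hev
    have key : 2 * (T * (j + 1)) ≤ 2 * ((j + 1) * ((j + 1) - 1) / 2 + T * T) := by
      have heq : 2 * ((j + 1) * ((j + 1) - 1) / 2 + T * T) = (j + 1) * j + 2 * (T * T) := by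
        omega
      rw [heq]
      zify
      nlinarith [sq_nonneg ((j:ℤ) - T), sq_nonneg ((T:ℤ) - 1), sq_nonneg (j:ℤ)]
    exact Nat.le_of_mul_le_mul_left key (by norm_num)


private lemma aux_sq_sq (a N : ℝ) (h : a ^ 4 ≤ N) : (a ^ 2) ^ 2 ≤ N := by nlinarith

private lemma aux_one_le_sq (a : ℝ) (h : 1 ≤ a) : 1 ≤ a ^ 2 := by nlinarith

private lemma aux_x_half (a N : ℝ) (h1 : 1 ≤ a) (h2 : a ^ 4 ≤ N) :
    a ^ 2 ≤ 1 / 2 * (4 * N) := by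
  nlinarith [mul_le_mul_of_nonneg_left (aux_one_le_sq a h1) (sq_nonneg a)]

private lemma aux_lt_sq (N t : ℝ) (h : N < t * t) : N ≤ t ^ 2 := by nlinarith

private lemma aux_mul_sq (a N : ℝ) (h : a * a ≤ N) : a ^ 2 ≤ N := by nlinarith

private lemma aux_u_bound (u : ℝ) (h0 : 0 ≤ u) (h1 : u ≤ 1) :
    1 ≤ (1 - u / 2) * (1 + u) := by nlinarith

private lemma aux_prod_nonneg (x : ℝ) (h0 : 0 < x) (h1 : x ≤ 1 / 2) :
    0 ≤ (1 - x) * (1 + x) := by nlinarith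

private lemma aux_prod_le_one (x : ℝ) (h0 : 0 < x) (h1 : x ≤ 1 / 2) :
    (1 - x) * (1 + x) ≤ 1 := by nlinarith

private lemma aux_inv_bound (x : ℝ) (h0 : 0 < x) (h1 : x ≤ 1 / 2) :
    1 ≤ (1 - x) * (1 + 2 * x) := by nlinarith

private lemma aux_alpha_bound (a : ℝ) (h : 96 ≤ a) : 2 * a ^ 2 - a ^ 3 / 32 ≤ -a := by
  nlinarith [mul_le_mul_of_nonneg_right h (sq_nonneg a),
    mul_nonneg (by linarith : (0:ℝ) ≤ a) (by linarith : (0:ℝ) ≤ a - 1)]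

set_option maxHeartbeats 1600000 in
/-- For every `p ∈ [0,1)` there are `α > 0` and `n₀` such that for all even
`n ≥ n₀`, the expectation `E[(1 - α²/(4n))^{S_n (S_n-1)/2}]` for
`S_n ~ Binomial(n/2, (α/2) n^{-1/2})`, written as an explicit sum over the
binomial distribution, is less than `1 - p`. -/
theorem exists_alpha_expectation_lt (p : ℝ) (hp0 : 0 ≤ p) (hp1 : p < 1) :
    ∃ α : ℝ, 0 < α ∧ ∃ n₀ : ℕ, ∀ n : ℕ, n₀ ≤ n → Even n →
      (∑ k ∈ Finset.range (n / 2 + 1),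
        (Nat.choose (n / 2) k : ℝ) * ((α / 2) * (n : ℝ) ^ (-(1 : ℝ) / 2)) ^ k *
          (1 - (α / 2) * (n : ℝ) ^ (-(1 : ℝ) / 2)) ^ (n / 2 - k) *
          (1 - α ^ 2 / (4 * (n : ℝ))) ^ (k * (k - 1) / 2)) < 1 - p := by
  have hp' : (0:ℝ) < 1 - p := by linarith
  set L : ℝ := Real.log ((1 - p)⁻¹) with hLdef
  obtain ⟨α, hα96, hαL⟩ : ∃ α : ℝ, 96 ≤ α ∧ L < α :=
    ⟨max 96 (L + 1), le_max_left _ _, lt_of_lt_of_le (lt_add_one L) (le_max_right _ _)⟩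
  have hα0 : (0:ℝ) < α := by linarith
  have hα1 : (1:ℝ) ≤ α := by linarith
  refine ⟨α, hα0, ⌈α ^ 4⌉₊, ?_⟩
  intro n hn hne
  -- basic numeric facts
  have hn4 : α ^ 4 ≤ (n:ℝ) := le_trans (Nat.le_ceil _) (by exact_mod_cast hn)
  have hnpos : (0:ℝ) < (n:ℝ) := lt_of_lt_of_le (by positivity) hn4
  set s : ℝ := Real.sqrt n with hsdef
  clear_value s
  have hs2 : s ^ 2 = (n:ℝ) := by rw [hsdef]; exact Real.sq_sqrt hnpos.le
  have hs0 : 0 < s := by rw [hsdef]; exact Real.sqrt_pos.mpr hnpos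
  have hsα : α ^ 2 ≤ s := by
    rw [hsdef]
    exact (Real.le_sqrt (by positivity) hnpos.le).mpr (aux_sq_sq α _ hn4)
  have hs1 : (1:ℝ) ≤ s := le_trans (aux_one_le_sq α hα1) hsα
  -- rewrite the rpow
  have hr : (n:ℝ) ^ (-(1 : ℝ) / 2) = s⁻¹ := by
    rw [show (-(1:ℝ)/2) = -(1/2 : ℝ) by ring, Real.rpow_neg hnpos.le, hsdef,
      Real.sqrt_eq_rpow]
  rw [hr]
  set m : ℕ := n / 2 with hmdef
  clear_value m
  have hm : (m:ℝ) = (n:ℝ) / 2 := by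
    obtain ⟨t, ht⟩ := hne
    have h1 : m = t := by omega
    rw [h1, ht]; push_cast; ring
  set pn : ℝ := α / 2 * s⁻¹ with hpndef
  clear_value pn
  set x : ℝ := α ^ 2 / (4 * (n:ℝ)) with hxdef
  clear_value x
  set q : ℝ := 1 - x with hqdef
  clear_value q
  have hx0 : 0 < x := by rw [hxdef]; positivity
  have hx2 : x ≤ 1 / 2 := by
    rw [hxdef, div_le_iff₀ (by positivity)]
    exact aux_x_half α _ hα1 hn4
  have hq0 : 0 ≤ q := by rw [hqdef]; linarith
  have hqpos : 0 < q := by rw [hqdef]; linarith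
  have hq1 : q ≤ 1 := by rw [hqdef]; linarith
  have hpn0 : 0 ≤ pn := by rw [hpndef]; positivity
  have hpn1 : pn ≤ 1 := by
    have h1 : s⁻¹ ≤ (α ^ 2)⁻¹ := inv_anti₀ (by positivity) hsα
    have h2 : pn ≤ α / 2 * (α ^ 2)⁻¹ := by
      rw [hpndef]; exact mul_le_mul_of_nonneg_left h1 (by positivity)
    have h3 : α / 2 * (α ^ 2)⁻¹ = 1 / (2 * α) := by
      field_simp
    have h4 : 1 / (2 * α) ≤ 1 := by
      rw [div_le_one (by positivity)]; linarith
    linarith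
  set T : ℕ := Nat.sqrt n + 1 with hTdef
  clear_value T
  have hT_lb : s ≤ (T:ℝ) := by
    have h1 : n < T * T := by rw [hTdef]; exact Nat.lt_succ_sqrt n
    have h2 : (n:ℝ) < ((T:ℝ)) * ((T:ℝ)) := by exact_mod_cast h1
    have h3 : (n:ℝ) ≤ (T:ℝ) ^ 2 := aux_lt_sq _ _ h2
    rw [hsdef]
    have h4 := Real.sqrt_le_sqrt h3
    rwa [Real.sqrt_sq (Nat.cast_nonneg T)] at h4
  have hT_ub : (T:ℝ) ≤ 2 * s := by
    have h1 : Nat.sqrt n * Nat.sqrt n ≤ n := Nat.sqrt_le n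
    have h2 : ((Nat.sqrt n : ℕ) : ℝ) * ((Nat.sqrt n : ℕ) : ℝ) ≤ (n:ℝ) := by
      exact_mod_cast h1
    have h3 : ((Nat.sqrt n : ℕ) : ℝ) ≤ s := by
      rw [hsdef]
      exact (Real.le_sqrt (Nat.cast_nonneg _) hnpos.le).mpr (aux_mul_sq _ _ h2)
    have h4 : (T:ℝ) = ((Nat.sqrt n : ℕ) : ℝ) + 1 := by rw [hTdef]; push_cast; ring
    rw [h4]; linarith
  have hTx1 : (T:ℝ) * x ≤ 1 := by
    have h1 : (T:ℝ) * x ≤ 2 * s * x := mul_le_mul_of_nonneg_right hT_ub hx0.le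
    have h2 : 2 * s * x = α ^ 2 / (2 * s) := by
      rw [hxdef, ← hs2]; field_simp; ring
    have h3 : α ^ 2 / (2 * s) ≤ 1 / 2 := by
      rw [div_le_div_iff₀ (by positivity) (by norm_num)]
      linarith
    linarith
  have hTx0 : 0 ≤ (T:ℝ) * x := by positivity
  have hTx_lb : α ^ 2 / (4 * s) ≤ (T:ℝ) * x := by
    have h1 : s * x ≤ (T:ℝ) * x := mul_le_mul_of_nonneg_right hT_lb hx0.le
    have h2 : s * x = α ^ 2 / (4 * s) := by
      rw [hxdef, ← hs2]; field_simp
    linarith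
  -- q^T ≤ 1/(1 + T x)
  have hqT_le : q ^ T ≤ 1 / (1 + (T:ℝ) * x) := by
    have hb : 1 + (T:ℝ) * x ≤ (1 + x) ^ T := one_add_mul_le_pow (by linarith) T
    have h1x : (0:ℝ) < (1 + x) ^ T := by positivity
    have hc : q ^ T * (1 + x) ^ T ≤ 1 := by
      rw [← mul_pow, hqdef]
      exact pow_le_one₀ (aux_prod_nonneg x hx0 hx2) (aux_prod_le_one x hx0 hx2)
    have hA : q ^ T ≤ 1 / (1 + x) ^ T := (le_div_iff₀ h1x).mpr (by linarith)
    have hB : 1 / (1 + x) ^ T ≤ 1 / (1 + (T:ℝ) * x) :=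
      one_div_le_one_div_of_le (by positivity) hb
    linarith
  have hqT0 : 0 ≤ q ^ T := pow_nonneg hq0 T
  have hqT1 : q ^ T ≤ 1 := pow_le_one₀ hq0 hq1
  have h1mqT : (T:ℝ) * x / 2 ≤ 1 - q ^ T := by
    have hpos : (0:ℝ) < 1 + (T:ℝ) * x := by linarith
    have h5 : 1 / (1 + (T:ℝ) * x) ≤ 1 - (T:ℝ) * x / 2 := by
      rw [div_le_iff₀ hpos]
      exact aux_u_bound _ hTx0 hTx1
    linarith
  set y : ℝ := pn * (1 - q ^ T) with hydef
  have hy0 : 0 ≤ y := mul_nonneg hpn0 (by linarith)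
  have hy1 : y ≤ 1 := by
    have h1 : y ≤ 1 * 1 := mul_le_mul hpn1 (by linarith) (by linarith) (by norm_num)
    linarith
  -- y * m ≥ α³/32
  have hym : α ^ 3 / 32 ≤ y * (m:ℝ) := by
    have hmval : (m:ℝ) = s ^ 2 / 2 := by rw [hm, hs2]
    have he : α ^ 2 / (8 * s) = α ^ 2 / (4 * s) / 2 := by ring
    have h1 : α ^ 2 / (8 * s) ≤ 1 - q ^ T := by
      rw [he]; linarith
    have h2 : α / 2 * s⁻¹ * (α ^ 2 / (8 * s)) * (s ^ 2 / 2) = α ^ 3 / 32 := by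
      field_simp; ring
    calc α ^ 3 / 32 = pn * (α ^ 2 / (8 * s)) * (s ^ 2 / 2) := by rw [hpndef, ← h2]
      _ ≤ pn * (1 - q ^ T) * (s ^ 2 / 2) := by
          apply mul_le_mul_of_nonneg_right _ (by positivity)
          exact mul_le_mul_of_nonneg_left h1 hpn0
      _ = y * (m:ℝ) := by rw [hydef, hmval]
  -- the term-wise bound and binomial theorem
  have key : (∑ k ∈ Finset.range (m + 1),
      (Nat.choose m k : ℝ) * pn ^ k * (1 - pn) ^ (m - k) *
        q ^ (k * (k - 1) / 2)) * q ^ (T * T)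
      ≤ (pn * q ^ T + (1 - pn)) ^ m := by
    rw [add_pow, Finset.sum_mul]
    apply Finset.sum_le_sum
    intro k _
    have hqe : q ^ (k * (k - 1) / 2) * q ^ (T * T) ≤ (q ^ T) ^ k := by
      rw [← pow_add, ← pow_mul]
      exact pow_le_pow_of_le_one hq0 hq1 (aux_nat_ineq T k)
    have hnn : (0:ℝ) ≤ (Nat.choose m k : ℝ) * pn ^ k * (1 - pn) ^ (m - k) :=
      mul_nonneg (mul_nonneg (Nat.cast_nonneg _) (pow_nonneg hpn0 _))
        (pow_nonneg (by linarith) _)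
    calc (Nat.choose m k : ℝ) * pn ^ k * (1 - pn) ^ (m - k) *
          q ^ (k * (k - 1) / 2) * q ^ (T * T)
        = ((Nat.choose m k : ℝ) * pn ^ k * (1 - pn) ^ (m - k)) *
            (q ^ (k * (k - 1) / 2) * q ^ (T * T)) := by ring
      _ ≤ ((Nat.choose m k : ℝ) * pn ^ k * (1 - pn) ^ (m - k)) * (q ^ T) ^ k :=
          mul_le_mul_of_nonneg_left hqe hnn
      _ = (pn * q ^ T) ^ k * (1 - pn) ^ (m - k) * (Nat.choose m k : ℝ) := by
          rw [mul_pow]; ring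
  have hqTT_pos : 0 < q ^ (T * T) := pow_pos hqpos _
  have hsum_le : (∑ k ∈ Finset.range (m + 1),
      (Nat.choose m k : ℝ) * pn ^ k * (1 - pn) ^ (m - k) *
        q ^ (k * (k - 1) / 2))
      ≤ (1 - y) ^ m / q ^ (T * T) := by
    rw [le_div_iff₀ hqTT_pos]
    have h1 : pn * q ^ T + (1 - pn) = 1 - y := by rw [hydef]; ring
    rw [← h1]
    exact key
  -- bound (1-y)^m
  have hBexp : (1 - y) ^ m ≤ Real.exp (-(α ^ 3 / 32)) := by
    have h1 : 1 - y ≤ Real.exp (-y) := by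
      have := Real.add_one_le_exp (-y); linarith
    have h2 : (1 - y) ^ m ≤ Real.exp (-y) ^ m :=
      pow_le_pow_left₀ (by linarith) h1 m
    have h3 : Real.exp (-y) ^ m = Real.exp ((m:ℝ) * (-y)) := (Real.exp_nat_mul _ m).symm
    have h4 : Real.exp ((m:ℝ) * (-y)) ≤ Real.exp (-(α ^ 3 / 32)) := by
      apply Real.exp_le_exp.mpr
      have h5 : (m:ℝ) * (-y) = -(y * (m:ℝ)) := by ring
      rw [h5]; linarith
    calc (1 - y) ^ m ≤ Real.exp (-y) ^ m := h2
      _ = Real.exp ((m:ℝ) * (-y)) := h3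
      _ ≤ Real.exp (-(α ^ 3 / 32)) := h4
  -- lower bound on q^(T*T)
  have hqTT_lb : Real.exp (-(2 * α ^ 2)) ≤ q ^ (T * T) := by
    have step1 : Real.exp (-(2 * x)) ≤ q := by
      have ha : 1 + 2 * x ≤ Real.exp (2 * x) := by
        have := Real.add_one_le_exp (2 * x); linarith
      have hb : Real.exp (-(2 * x)) ≤ (1 + 2 * x)⁻¹ := by
        rw [Real.exp_neg]
        exact inv_anti₀ (by positivity) ha
      have hc : (1 + 2 * x)⁻¹ ≤ 1 - x := by
        rw [inv_eq_one_div, div_le_iff₀ (by positivity)]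
        exact aux_inv_bound x hx0 hx2
      rw [hqdef]; linarith
    have step2 : Real.exp (-(2 * x)) ^ (T * T) ≤ q ^ (T * T) :=
      pow_le_pow_left₀ (Real.exp_nonneg _) step1 _
    have step3 : Real.exp (-(2 * α ^ 2)) ≤ Real.exp (-(2 * x)) ^ (T * T) := by
      rw [← Real.exp_nat_mul]
      apply Real.exp_le_exp.mpr
      have hTT : ((T * T : ℕ) : ℝ) = (T:ℝ) ^ 2 := by push_cast; ring
      rw [hTT]
      have h1 : (T:ℝ) ^ 2 ≤ (2 * s) ^ 2 :=
        pow_le_pow_left₀ (Nat.cast_nonneg T) hT_ub 2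
      have h2 : x * (4 * s ^ 2) = α ^ 2 := by
        rw [hxdef, ← hs2]; field_simp
      linarith [mul_le_mul_of_nonneg_left h1 hx0.le]
    linarith
  -- combine
  have hfin : (1 - y) ^ m / q ^ (T * T) ≤ Real.exp (2 * α ^ 2 - α ^ 3 / 32) := by
    have hdd := div_le_div₀ (Real.exp_nonneg (-(α ^ 3 / 32))) hBexp
      (Real.exp_pos (-(2 * α ^ 2))) hqTT_lb
    calc (1 - y) ^ m / q ^ (T * T)
        ≤ Real.exp (-(α ^ 3 / 32)) / Real.exp (-(2 * α ^ 2)) := hdd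
      _ = Real.exp (-(α ^ 3 / 32) - -(2 * α ^ 2)) := (Real.exp_sub _ _).symm
      _ = Real.exp (2 * α ^ 2 - α ^ 3 / 32) := by
          rw [show -(α ^ 3 / 32) - -(2 * α ^ 2) = 2 * α ^ 2 - α ^ 3 / 32 from by ring]
  have hlast : Real.exp (2 * α ^ 2 - α ^ 3 / 32) < 1 - p := by
    have hL : L = -Real.log (1 - p) := by rw [hLdef, Real.log_inv]
    have h1 : 2 * α ^ 2 - α ^ 3 / 32 ≤ -α := by
      exact aux_alpha_bound α hα96
    have h2 : -α < Real.log (1 - p) := by rw [hL] at hαL; linarith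
    calc Real.exp (2 * α ^ 2 - α ^ 3 / 32) < Real.exp (Real.log (1 - p)) := by
          apply Real.exp_lt_exp.mpr; linarith
      _ = 1 - p := Real.exp_log hp'
  calc (∑ k ∈ Finset.range (m + 1),
      (Nat.choose m k : ℝ) * pn ^ k * (1 - pn) ^ (m - k) *
        q ^ (k * (k - 1) / 2))
      ≤ (1 - y) ^ m / q ^ (T * T) := hsum_le
    _ ≤ Real.exp (2 * α ^ 2 - α ^ 3 / 32) := hfin
    _ < 1 - p := hlast
end

section
/- Let d be a real number with 1.055 < d ≤ √2, and let X, X' be independent random points each uniformly distributed on the unit square [0,1]². Then P(‖X − X'‖ > d) ≤ (7/16)·(1 − √(d² − 1))⁴, where ‖·‖ is the Euclidean norm on ℝ². Equivalently, the 4-dimensional Lebesgue measure of {(x,x') ∈ [0,1]² × [0,1]² : ‖x − x'‖ > d} is at most (7/16)·(1 − √(d² − 1))⁴. -/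
open MeasureTheory

private lemma integral_max_aux (c : ℝ) (h0 : 0 ≤ c) (h1 : c ≤ 1) :
    ∫ x in (0:ℝ)..1, max (x - c) 0 = (1 - c) ^ 2 / 2 := by
  have hcont : Continuous fun x : ℝ => max (x - c) 0 :=
    (continuous_id.sub continuous_const).max continuous_const
  rw [← intervalIntegral.integral_add_adjacent_intervals (a := (0:ℝ)) (b := c) (c := 1)
      (hcont.intervalIntegrable _ _) (hcont.intervalIntegrable _ _)]
  have e1 : ∫ x in (0:ℝ)..c, max (x - c) 0 = ∫ x in (0:ℝ)..c, (0:ℝ) := by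
    apply intervalIntegral.integral_congr
    intro x hx
    rw [Set.uIcc_of_le h0] at hx
    exact max_eq_right (by linarith [hx.2])
  have e2 : ∫ x in c..(1:ℝ), max (x - c) 0 = ∫ x in c..(1:ℝ), (x - c) := by
    apply intervalIntegral.integral_congr
    intro x hx
    rw [Set.uIcc_of_le h1] at hx
    exact max_eq_left (by linarith [hx.1])
  have e3 : ∫ x in c..(1:ℝ), (x - c) = ∫ x in (c - c)..(1 - c), x :=
    intervalIntegral.integral_comp_sub_right (fun y => y) c
  rw [e1, e2, e3, integral_id]
  simp

private lemma lintegral_ofReal_aux (c : ℝ) (h0 : 0 ≤ c) (h1 : c ≤ 1) :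
    ∫⁻ x in Set.Icc (0:ℝ) 1, ENNReal.ofReal (x - c) ≤ ENNReal.ofReal ((1 - c) ^ 2 / 2) := by
  have hcont : Continuous fun x : ℝ => max (x - c) 0 :=
    (continuous_id.sub continuous_const).max continuous_const
  have h : ∫⁻ x in Set.Icc (0:ℝ) 1, ENNReal.ofReal (x - c)
      = ∫⁻ x in Set.Icc (0:ℝ) 1, ENNReal.ofReal (max (x - c) 0) := by
    apply lintegral_congr
    intro x
    rcases le_total (x - c) 0 with h | h
    · simp [max_eq_right h, ENNReal.ofReal_eq_zero.2 h]
    · simp [max_eq_left h]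
  rw [h, ← ofReal_integral_eq_lintegral_ofReal
      (hcont.integrableOn_Icc) (Filter.Eventually.of_forall fun x => le_max_right _ _)]
  apply ENNReal.ofReal_le_ofReal
  rw [MeasureTheory.integral_Icc_eq_integral_Ioc,
    ← intervalIntegral.integral_of_le (by norm_num : (0:ℝ) ≤ 1)]
  rw [integral_max_aux c h0 h1]

private lemma lintegral_ofReal_aux' (c : ℝ) (h0 : 0 ≤ c) (h1 : c ≤ 1) :
    ∫⁻ x in Set.Icc (0:ℝ) 1, ENNReal.ofReal (1 - x - c) ≤ ENNReal.ofReal ((1 - c) ^ 2 / 2) := by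
  have hcont : Continuous fun x : ℝ => max (1 - x - c) 0 :=
    ((continuous_const.sub continuous_id).sub continuous_const).max continuous_const
  have h : ∫⁻ x in Set.Icc (0:ℝ) 1, ENNReal.ofReal (1 - x - c)
      = ∫⁻ x in Set.Icc (0:ℝ) 1, ENNReal.ofReal (max (1 - x - c) 0) := by
    apply lintegral_congr
    intro x
    rcases le_total (1 - x - c) 0 with h | h
    · simp [max_eq_right h, ENNReal.ofReal_eq_zero.2 h]
    · simp [max_eq_left h]
  rw [h, ← ofReal_integral_eq_lintegral_ofReal
      (hcont.integrableOn_Icc) (Filter.Eventually.of_forall fun x => le_max_right _ _)]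
  apply ENNReal.ofReal_le_ofReal
  rw [MeasureTheory.integral_Icc_eq_integral_Ioc,
    ← intervalIntegral.integral_of_le (by norm_num : (0:ℝ) ≤ 1)]
  apply le_of_eq
  have : ∀ x : ℝ, max (1 - x - c) 0 = (fun y => max (y - c) 0) (1 - x) := by
    intro x; simp [sub_sub]
  calc ∫ x in (0:ℝ)..1, max (1 - x - c) 0
      = ∫ x in (0:ℝ)..1, (fun y => max (y - c) 0) (1 - x) := by
        apply intervalIntegral.integral_congr; intro x _; exact this x
    _ = ∫ y in (1-(1:ℝ))..(1-0), max (y - c) 0 :=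
        intervalIntegral.integral_comp_sub_left (fun y => max (y - c) 0) 1
    _ = (1 - c) ^ 2 / 2 := by norm_num [integral_max_aux c h0 h1]

private lemma tri_measure (c : ℝ) (h0 : 0 ≤ c) (h1 : c ≤ 1) :
    volume {p : ℝ × ℝ | p.1 ∈ Set.Icc (0:ℝ) 1 ∧ p.2 ∈ Set.Icc (0:ℝ) 1 ∧ c ≤ |p.1 - p.2|}
      ≤ ENNReal.ofReal ((1 - c) ^ 2) := by
  have hSm : MeasurableSet {p : ℝ × ℝ |
      p.1 ∈ Set.Icc (0:ℝ) 1 ∧ p.2 ∈ Set.Icc (0:ℝ) 1 ∧ c ≤ |p.1 - p.2|} := by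
    apply MeasurableSet.inter (measurableSet_Icc.preimage measurable_fst)
    apply MeasurableSet.inter (measurableSet_Icc.preimage measurable_snd)
    exact (isClosed_le continuous_const ((continuous_fst.sub continuous_snd).abs)).measurableSet
  rw [MeasureTheory.Measure.volume_eq_prod, Measure.prod_apply hSm]
  have hslice : ∀ x : ℝ, volume (Prod.mk x ⁻¹' {p : ℝ × ℝ |
        p.1 ∈ Set.Icc (0:ℝ) 1 ∧ p.2 ∈ Set.Icc (0:ℝ) 1 ∧ c ≤ |p.1 - p.2|})
      ≤ Set.indicator (Set.Icc (0:ℝ) 1)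
        (fun x => ENNReal.ofReal (x - c) + ENNReal.ofReal (1 - x - c)) x := by
    intro x
    by_cases hx : x ∈ Set.Icc (0:ℝ) 1
    · rw [Set.indicator_of_mem hx]
      have hsub : (Prod.mk x ⁻¹' {p : ℝ × ℝ |
            p.1 ∈ Set.Icc (0:ℝ) 1 ∧ p.2 ∈ Set.Icc (0:ℝ) 1 ∧ c ≤ |p.1 - p.2|})
          ⊆ Set.Icc (0:ℝ) (x - c) ∪ Set.Icc (x + c) 1 := by
        intro y hy
        obtain ⟨-, hy1, hy2⟩ := hy
        rcases le_abs.mp hy2 with h | h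
        · exact Or.inl ⟨hy1.1, by linarith⟩
        · exact Or.inr ⟨by linarith, hy1.2⟩
      calc volume (Prod.mk x ⁻¹' _) ≤ volume (Set.Icc (0:ℝ) (x - c) ∪ Set.Icc (x + c) 1) :=
            measure_mono hsub
        _ ≤ volume (Set.Icc (0:ℝ) (x - c)) + volume (Set.Icc (x + c) 1) :=
            measure_union_le _ _
        _ = ENNReal.ofReal (x - c) + ENNReal.ofReal (1 - x - c) := by
            rw [Real.volume_Icc, Real.volume_Icc]
            norm_num [sub_sub]
    · have : (Prod.mk x ⁻¹' {p : ℝ × ℝ |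
            p.1 ∈ Set.Icc (0:ℝ) 1 ∧ p.2 ∈ Set.Icc (0:ℝ) 1 ∧ c ≤ |p.1 - p.2|}) = ∅ := by
        ext y; simp only [Set.mem_preimage, Set.mem_setOf_eq, Set.mem_empty_iff_false,
          iff_false]
        rintro ⟨h, -, -⟩; exact hx h
      rw [this]
      simp
  calc ∫⁻ x, volume (Prod.mk x ⁻¹' _)
      ≤ ∫⁻ x, Set.indicator (Set.Icc (0:ℝ) 1)
          (fun x => ENNReal.ofReal (x - c) + ENNReal.ofReal (1 - x - c)) x :=
        lintegral_mono hslice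
    _ = ∫⁻ x in Set.Icc (0:ℝ) 1,
          (ENNReal.ofReal (x - c) + ENNReal.ofReal (1 - x - c)) :=
        lintegral_indicator measurableSet_Icc _
    _ = (∫⁻ x in Set.Icc (0:ℝ) 1, ENNReal.ofReal (x - c))
        + ∫⁻ x in Set.Icc (0:ℝ) 1, ENNReal.ofReal (1 - x - c) := by
        apply lintegral_add_left
        exact (measurable_id.sub_const c).ennreal_ofReal
    _ ≤ ENNReal.ofReal ((1 - c) ^ 2 / 2) + ENNReal.ofReal ((1 - c) ^ 2 / 2) :=
        add_le_add (lintegral_ofReal_aux c h0 h1) (lintegral_ofReal_aux' c h0 h1)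
    _ = ENNReal.ofReal ((1 - c) ^ 2) := by
        rw [← ENNReal.ofReal_add (by positivity) (by positivity)]
        norm_num

private lemma tri_meas (c : ℝ) :
    MeasurableSet {p : ℝ × ℝ | p.1 ∈ Set.Icc (0:ℝ) 1 ∧ p.2 ∈ Set.Icc (0:ℝ) 1 ∧ c ≤ |p.1 - p.2|} := by
  apply MeasurableSet.inter (measurableSet_Icc.preimage measurable_fst)
  apply MeasurableSet.inter (measurableSet_Icc.preimage measurable_snd)
  exact (isClosed_le continuous_const ((continuous_fst.sub continuous_snd).abs)).measurableSet

/-- Tail bound for the distance of two independent uniform random points of the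
unit square: for `1.055 < d ≤ √2`, the (4-dimensional Lebesgue) measure of the
set of pairs of points of the unit square at distance greater than `d` is at
most `(7/16) (1 - √(d² - 1))⁴`. -/
theorem prob_dist_gt_le (d : ℝ) (hd1 : 1.055 < d) (hd2 : d ≤ Real.sqrt 2) :
    volume {q : EuclideanSpace ℝ (Fin 2) × EuclideanSpace ℝ (Fin 2) |
        (∀ i, q.1 i ∈ Set.Icc (0 : ℝ) 1) ∧ (∀ i, q.2 i ∈ Set.Icc (0 : ℝ) 1) ∧
          d < dist q.1 q.2} ≤
      ENNReal.ofReal ((7 / 16) * (1 - Real.sqrt (d ^ 2 - 1)) ^ 4) := by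
  set s : ℝ := 1 - Real.sqrt (d ^ 2 - 1) with hs_def
  have h1d : (1:ℝ) < d := by
    have : (1:ℝ) < 1.055 := by norm_num
    linarith
  have hdm1 : (0:ℝ) ≤ d ^ 2 - 1 := by nlinarith
  have h1ms : 1 - s = Real.sqrt (d ^ 2 - 1) := by rw [hs_def]; ring
  have hsq : (1 - s) ^ 2 = d ^ 2 - 1 := by rw [h1ms, Real.sq_sqrt hdm1]
  have hs1 : s ≤ 1 := by
    rw [hs_def]; linarith [Real.sqrt_nonneg (d ^ 2 - 1)]
  have hs0 : 0 ≤ s := by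
    have hd2' : d ^ 2 - 1 ≤ 1 := by
      nlinarith [Real.sq_sqrt (by norm_num : (0:ℝ) ≤ 2), Real.sqrt_nonneg 2]
    have h := Real.sqrt_le_sqrt hd2'
    rw [Real.sqrt_one] at h
    rw [hs_def]; linarith
  -- coordinate projection onto ℝ × ℝ
  set e : EuclideanSpace ℝ (Fin 2) → ℝ × ℝ :=
    ⇑(MeasurableEquiv.finTwoArrow (α := ℝ)) ∘ ⇑(MeasurableEquiv.toLp 2 (Fin 2 → ℝ)).symm
      with he_def
  have he : MeasurePreserving e volume volume :=
    (volume_preserving_finTwoArrow ℝ).comp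
      (EuclideanSpace.volume_preserving_symm_measurableEquiv_toLp (Fin 2))
  have he_app : ∀ x : EuclideanSpace ℝ (Fin 2), e x = (x 0, x 1) := fun x => rfl
  -- middle swap of a product of four factors
  have hswap : MeasurePreserving
      (fun p : (ℝ × ℝ) × (ℝ × ℝ) => ((p.1.1, p.2.1), (p.1.2, p.2.2)))
      (volume : Measure ((ℝ × ℝ) × (ℝ × ℝ))) volume := by
    have mpg : MeasurePreserving
        (⇑(MeasurableEquiv.prodAssoc (α := ℝ) (β := ℝ) (γ := ℝ)) ∘
          (Prod.map Prod.swap (id : ℝ → ℝ) ∘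
            ⇑(MeasurableEquiv.prodAssoc (α := ℝ) (β := ℝ) (γ := ℝ)).symm))
        volume volume :=
      (volume_preserving_prodAssoc).comp
        ((Measure.measurePreserving_swap.prod (MeasurePreserving.id volume)).comp
          ((volume_preserving_prodAssoc).symm MeasurableEquiv.prodAssoc))
    have mp1 := volume_preserving_prodAssoc (α₁ := ℝ) (β₁ := ℝ) (γ₁ := ℝ × ℝ)
    have mp3 := (volume_preserving_prodAssoc (α₁ := ℝ) (β₁ := ℝ) (γ₁ := ℝ × ℝ)).symm
      MeasurableEquiv.prodAssoc
    have mp2 := (MeasurePreserving.id (volume : Measure ℝ)).prod mpg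
    exact mp3.comp (mp2.comp mp1)
  set Ψ : EuclideanSpace ℝ (Fin 2) × EuclideanSpace ℝ (Fin 2) → (ℝ × ℝ) × (ℝ × ℝ) :=
    fun q => (((e q.1).1, (e q.2).1), ((e q.1).2, (e q.2).2)) with hΨ_def
  have hΨ : MeasurePreserving Ψ volume volume := hswap.comp (he.prod he)
  set T : ℝ → Set (ℝ × ℝ) := fun c =>
    {p : ℝ × ℝ | p.1 ∈ Set.Icc (0:ℝ) 1 ∧ p.2 ∈ Set.Icc (0:ℝ) 1 ∧ c ≤ |p.1 - p.2|} with hT_def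
  -- bound for each product piece
  have hpiece : ∀ a b : ℝ, 0 ≤ a → a ≤ 1 → 0 ≤ b → b ≤ 1 →
      volume (Ψ ⁻¹' (T a ×ˢ T b)) ≤ ENNReal.ofReal ((1 - a) ^ 2 * (1 - b) ^ 2) := by
    intro a b ha0 ha1 hb0 hb1
    rw [hΨ.measure_preimage ((tri_meas a).prod (tri_meas b)).nullMeasurableSet]
    rw [show (volume : Measure ((ℝ × ℝ) × (ℝ × ℝ))) = Measure.prod volume volume from rfl,
      Measure.prod_prod]
    calc volume (T a) * volume (T b)
        ≤ ENNReal.ofReal ((1 - a) ^ 2) * ENNReal.ofReal ((1 - b) ^ 2) :=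
          mul_le_mul' (tri_measure a ha0 ha1) (tri_measure b hb0 hb1)
      _ = ENNReal.ofReal ((1 - a) ^ 2 * (1 - b) ^ 2) :=
          (ENNReal.ofReal_mul (by positivity)).symm
  -- inclusion into the union of three product pieces
  have hsub : {q : EuclideanSpace ℝ (Fin 2) × EuclideanSpace ℝ (Fin 2) |
        (∀ i, q.1 i ∈ Set.Icc (0 : ℝ) 1) ∧ (∀ i, q.2 i ∈ Set.Icc (0 : ℝ) 1) ∧
          d < dist q.1 q.2} ⊆
      Ψ ⁻¹' (T (1 - s) ×ˢ T (1 - s/3)) ∪ Ψ ⁻¹' (T (1 - 2*s/3) ×ˢ T (1 - 2*s/3)) ∪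
        Ψ ⁻¹' (T (1 - s/3) ×ˢ T (1 - s)) := by
    rintro q ⟨h1, h2, hdist⟩
    set u : ℝ := |q.1 0 - q.2 0| with hu_def
    set v : ℝ := |q.1 1 - q.2 1| with hv_def
    have hu0 : 0 ≤ u := abs_nonneg _
    have hv0 : 0 ≤ v := abs_nonneg _
    have hu1 : u ≤ 1 := by
      rw [hu_def]
      exact abs_le.2 ⟨by linarith [(h1 0).1, (h1 0).2, (h2 0).1, (h2 0).2],
        by linarith [(h1 0).1, (h1 0).2, (h2 0).1, (h2 0).2]⟩
    have hv1 : v ≤ 1 := by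
      rw [hv_def]
      exact abs_le.2 ⟨by linarith [(h1 1).1, (h1 1).2, (h2 1).1, (h2 1).2],
        by linarith [(h1 1).1, (h1 1).2, (h2 1).1, (h2 1).2]⟩
    have hde : dist q.1 q.2 = Real.sqrt (u ^ 2 + v ^ 2) := by
      rw [EuclideanSpace.dist_eq, Fin.sum_univ_two, Real.dist_eq, Real.dist_eq,
        hu_def, hv_def, sq_abs, sq_abs]
    have hd2sq : d ^ 2 < u ^ 2 + v ^ 2 := by
      rw [hde] at hdist
      have h := Real.sq_sqrt (by positivity : (0:ℝ) ≤ u ^ 2 + v ^ 2)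
      nlinarith [Real.sqrt_nonneg (u ^ 2 + v ^ 2)]
    have key : 2 - s < u + v := by
      by_contra hc
      push_neg at hc
      rcases le_or_gt s (u + v) with hσ | hσ
      · nlinarith [mul_nonneg (sub_nonneg.2 hu1) (sub_nonneg.2 hv1),
          mul_nonneg (sub_nonneg.2 hc) (sub_nonneg.2 hσ)]
      · nlinarith [mul_nonneg hu0 hv0]
    have memT : ∀ (c : ℝ) (i : Fin 2), c ≤ |q.1 i - q.2 i| →
        (q.1 i, q.2 i) ∈ T c := by
      intro c i hci
      exact ⟨h1 i, h2 i, hci⟩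
    have hΨq : Ψ q = ((q.1 0, q.2 0), (q.1 1, q.2 1)) := by
      rw [hΨ_def]; simp [he_app]
    rcases le_or_gt (1 - s/3) v with hv3 | hv3
    · apply Set.mem_union_left
      apply Set.mem_union_left
      rw [Set.mem_preimage, hΨq]
      exact ⟨memT _ 0 (by rw [← hu_def]; linarith), memT _ 1 (by rw [← hv_def]; linarith)⟩
    · rcases le_or_gt (1 - 2*s/3) v with hv4 | hv4
      · apply Set.mem_union_left
        apply Set.mem_union_right
        rw [Set.mem_preimage, hΨq]
        exact ⟨memT _ 0 (by rw [← hu_def]; linarith), memT _ 1 (by rw [← hv_def]; linarith)⟩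
      · apply Set.mem_union_right
        rw [Set.mem_preimage, hΨq]
        exact ⟨memT _ 0 (by rw [← hu_def]; linarith), memT _ 1 (by rw [← hv_def]; linarith)⟩
  -- put everything together
  have hp1 := hpiece (1 - s) (1 - s/3) (by linarith) (by linarith) (by linarith) (by linarith)
  have hp2 := hpiece (1 - 2*s/3) (1 - 2*s/3) (by linarith) (by linarith) (by linarith)
    (by linarith)
  have hp3 := hpiece (1 - s/3) (1 - s) (by linarith) (by linarith) (by linarith) (by linarith)
  calc volume {q : EuclideanSpace ℝ (Fin 2) × EuclideanSpace ℝ (Fin 2) |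
        (∀ i, q.1 i ∈ Set.Icc (0 : ℝ) 1) ∧ (∀ i, q.2 i ∈ Set.Icc (0 : ℝ) 1) ∧
          d < dist q.1 q.2}
      ≤ volume (Ψ ⁻¹' (T (1 - s) ×ˢ T (1 - s/3)) ∪
          Ψ ⁻¹' (T (1 - 2*s/3) ×ˢ T (1 - 2*s/3)) ∪
          Ψ ⁻¹' (T (1 - s/3) ×ˢ T (1 - s))) := measure_mono hsub
    _ ≤ volume (Ψ ⁻¹' (T (1 - s) ×ˢ T (1 - s/3))) +
          volume (Ψ ⁻¹' (T (1 - 2*s/3) ×ˢ T (1 - 2*s/3))) +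
          volume (Ψ ⁻¹' (T (1 - s/3) ×ˢ T (1 - s))) :=
        le_trans (measure_union_le _ _) (add_le_add_left (measure_union_le _ _) _)
    _ ≤ ENNReal.ofReal ((1 - (1 - s)) ^ 2 * (1 - (1 - s/3)) ^ 2) +
          ENNReal.ofReal ((1 - (1 - 2*s/3)) ^ 2 * (1 - (1 - 2*s/3)) ^ 2) +
          ENNReal.ofReal ((1 - (1 - s/3)) ^ 2 * (1 - (1 - s)) ^ 2) :=
        add_le_add (add_le_add hp1 hp2) hp3
    _ ≤ ENNReal.ofReal ((7 / 16) * s ^ 4) := by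
        rw [← ENNReal.ofReal_add (by positivity) (by positivity),
          ← ENNReal.ofReal_add (by positivity) (by positivity)]
        apply ENNReal.ofReal_le_ofReal
        nlinarith [pow_nonneg hs0 4]
end

section
/- Fix α > 0 and let X, X' be independent random points each uniformly distributed on the unit square [0,1]². There exist a constant C > 0 and an integer n₀ such that for all n ≥ n₀, P(‖X − X'‖ > √2 − α·n^{−1/4}) ≤ C/n. -/
open MeasureTheory

def cornerBox (A B : Set ℝ) : Set (EuclideanSpace ℝ (Fin 2)) := {x | x 0 ∈ A ∧ x 1 ∈ B}

lemma box_vol (A B : Set ℝ) (hA : MeasurableSet A) (hB : MeasurableSet B) :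
    volume (cornerBox A B) = volume A * volume B := by
  have hset : cornerBox A B
      = ((MeasurableEquiv.toLp 2 (Fin 2 → ℝ)).symm) ⁻¹' (Set.univ.pi ![A, B]) := by
    ext x
    simp [cornerBox, Set.mem_pi, Fin.forall_fin_two, MeasurableEquiv.coe_toLp_symm]
  rw [hset, (EuclideanSpace.volume_preserving_symm_measurableEquiv_toLp (Fin 2)).measure_preimage
    ((MeasurableSet.univ_pi (by intro i; fin_cases i <;> simpa)).nullMeasurableSet),
    volume_pi_pi]
  simp [Fin.prod_univ_two]

lemma corner_lemma (x y : EuclideanSpace ℝ (Fin 2))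
    (hx : ∀ i, x i ∈ Set.Icc (0 : ℝ) 1) (hy : ∀ i, y i ∈ Set.Icc (0 : ℝ) 1)
    (t : ℝ) (ht0 : 0 < t) (ht1 : t ≤ 1)
    (hd : Real.sqrt 2 - t / (2 * Real.sqrt 2) < dist x y) :
    ∀ i, (x i ∈ Set.Icc (0:ℝ) t ∧ y i ∈ Set.Icc (1 - t) 1) ∨
         (y i ∈ Set.Icc (0:ℝ) t ∧ x i ∈ Set.Icc (1 - t) 1) := by
  have hs2 : (0:ℝ) < Real.sqrt 2 := by positivity
  have hs2sq : Real.sqrt 2 ^ 2 = 2 := Real.sq_sqrt (by norm_num)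
  have hdist_sq : dist x y ^ 2 = (x 0 - y 0) ^ 2 + (x 1 - y 1) ^ 2 := by
    rw [EuclideanSpace.dist_eq, Real.sq_sqrt (by positivity)]
    simp [Fin.sum_univ_two, Real.dist_eq, sq_abs]
  have hthr : (0:ℝ) ≤ Real.sqrt 2 - t / (2 * Real.sqrt 2) := by
    rw [sub_nonneg, div_le_iff₀ (by positivity)]
    nlinarith
  have hsq : (Real.sqrt 2 - t / (2 * Real.sqrt 2)) ^ 2 < dist x y ^ 2 := by
    apply pow_lt_pow_left₀ hd hthr
    norm_num
  have hlow : 2 - t ≤ (Real.sqrt 2 - t / (2 * Real.sqrt 2)) ^ 2 := by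
    have h : (Real.sqrt 2 - t / (2 * Real.sqrt 2)) ^ 2
        = 2 - t + (t / (2 * Real.sqrt 2)) ^ 2 := by
      field_simp
      nlinarith
    nlinarith [sq_nonneg (t / (2 * Real.sqrt 2))]
  have hx0 := hx 0; have hx1 := hx 1; have hy0 := hy 0; have hy1 := hy 1
  rw [Set.mem_Icc] at hx0 hx1 hy0 hy1
  have hb0 : (x 0 - y 0) ^ 2 ≤ 1 := by nlinarith
  have hb1 : (x 1 - y 1) ^ 2 ≤ 1 := by nlinarith
  have hsum : 2 - t < (x 0 - y 0) ^ 2 + (x 1 - y 1) ^ 2 := by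
    rw [← hdist_sq]; linarith
  have hi0 : 1 - t < (x 0 - y 0) ^ 2 := by linarith
  have hi1 : 1 - t < (x 1 - y 1) ^ 2 := by linarith
  have key : ∀ i, 1 - t < |x i - y i| := by
    intro i
    have hi : 1 - t < (x i - y i) ^ 2 := by
      fin_cases i
      · exact hi0
      · exact hi1
    by_contra hcon
    push_neg at hcon
    have h1 : 0 ≤ 1 - t := le_trans (abs_nonneg _) hcon
    have h2 : (x i - y i) ^ 2 ≤ (1 - t) ^ 2 := by
      rw [← sq_abs]; exact pow_le_pow_left₀ (abs_nonneg _) hcon 2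
    nlinarith
  intro i
  have hk := key i
  have hxi := hx i; have hyi := hy i
  simp only [Set.mem_Icc] at hxi hyi ⊢
  rcases le_total (x i) (y i) with h | h
  · rw [abs_of_nonpos (by linarith)] at hk
    left; constructor <;> constructor <;> linarith
  · rw [abs_of_nonneg (by linarith)] at hk
    right; constructor <;> constructor <;> linarith

/-- With threshold `δ_n = √2 - α n^{-1/4}`, the probability that two
independent uniform points of the unit square are at distance greater than
`δ_n` is `O(1/n)`: there are `C > 0` and `n₀` such that for all `n ≥ n₀` the
measure of the corresponding set of pairs is at most `C / n`. -/
theorem prob_dist_gt_threshold_le (α : ℝ) (hα : 0 < α) :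
    ∃ C : ℝ, 0 < C ∧ ∃ n₀ : ℕ, ∀ n : ℕ, n₀ ≤ n →
      volume {q : EuclideanSpace ℝ (Fin 2) × EuclideanSpace ℝ (Fin 2) |
          (∀ i, q.1 i ∈ Set.Icc (0 : ℝ) 1) ∧ (∀ i, q.2 i ∈ Set.Icc (0 : ℝ) 1) ∧
            Real.sqrt 2 - α * (n : ℝ) ^ (-(1 : ℝ) / 4) < dist q.1 q.2} ≤
        ENNReal.ofReal (C / n) := by
  have hs2 : (0:ℝ) < Real.sqrt 2 := by positivity
  refine ⟨256 * α ^ 4, by positivity, ⌈(2 * Real.sqrt 2 * α) ^ 4⌉₊ + 1, fun n hn => ?_⟩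
  have hn1 : 1 ≤ n := le_trans (by omega) hn
  have hnpos : (0:ℝ) < n := by exact_mod_cast hn1
  set b : ℝ := 2 * Real.sqrt 2 * α with hb
  have hbpos : 0 < b := by positivity
  have hbn : b ^ 4 ≤ (n:ℝ) := by
    calc b ^ 4 ≤ (⌈b ^ 4⌉₊ : ℝ) := Nat.le_ceil _
    _ ≤ (n:ℝ) := by exact_mod_cast le_trans (by omega) hn
  set t : ℝ := b * (n : ℝ) ^ (-(1 : ℝ) / 4) with htdef
  have hrpos : (0:ℝ) < (n : ℝ) ^ (-(1 : ℝ) / 4) := Real.rpow_pos_of_pos hnpos _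
  have ht0 : 0 < t := by positivity
  have hquarter : (0:ℝ) < (n : ℝ) ^ ((1 : ℝ) / 4) := Real.rpow_pos_of_pos hnpos _
  have hbq : b ≤ (n : ℝ) ^ ((1 : ℝ) / 4) := by
    have : (b ^ 4) ^ ((1:ℝ)/4) ≤ (n:ℝ) ^ ((1:ℝ)/4) :=
      Real.rpow_le_rpow (by positivity) hbn (by norm_num)
    rwa [← Real.rpow_natCast b 4, ← Real.rpow_mul hbpos.le, show ((4:ℕ):ℝ) * (1/4) = 1 by norm_num,
      Real.rpow_one] at this
  have ht1 : t ≤ 1 := by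
    have hneg : ((n:ℝ)) ^ (-(1 : ℝ) / 4) = ((n:ℝ) ^ ((1:ℝ)/4))⁻¹ := by
      rw [← Real.rpow_neg hnpos.le]; norm_num
    rw [htdef, hneg, ← div_eq_mul_inv, div_le_one hquarter]
    exact hbq
  have hthr_eq : α * (n : ℝ) ^ (-(1 : ℝ) / 4) = t / (2 * Real.sqrt 2) := by
    rw [htdef, hb]; field_simp
  set I0 : Set ℝ := Set.Icc (0:ℝ) t with hI0def
  set I1 : Set ℝ := Set.Icc (1 - t) 1 with hI1def
  have hI0 : MeasurableSet I0 := measurableSet_Icc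
  have hI1 : MeasurableSet I1 := measurableSet_Icc
  have hvI0 : volume I0 = ENNReal.ofReal t := by simp [hI0def, Real.volume_Icc]
  have hvI1 : volume I1 = ENNReal.ofReal t := by simp [hI1def, Real.volume_Icc]
  have hsub : {q : EuclideanSpace ℝ (Fin 2) × EuclideanSpace ℝ (Fin 2) |
          (∀ i, q.1 i ∈ Set.Icc (0 : ℝ) 1) ∧ (∀ i, q.2 i ∈ Set.Icc (0 : ℝ) 1) ∧
            Real.sqrt 2 - α * (n : ℝ) ^ (-(1 : ℝ) / 4) < dist q.1 q.2} ⊆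
      (cornerBox I0 I0 ×ˢ cornerBox I1 I1) ∪ (cornerBox I0 I1 ×ˢ cornerBox I1 I0) ∪
      (cornerBox I1 I0 ×ˢ cornerBox I0 I1) ∪ (cornerBox I1 I1 ×ˢ cornerBox I0 I0) := by
    rintro ⟨x, y⟩ ⟨hx, hy, hd⟩
    rw [hthr_eq] at hd
    have hc := corner_lemma x y hx hy t ht0 ht1 hd
    rcases hc 0 with ⟨h0x, h0y⟩ | ⟨h0y, h0x⟩ <;> rcases hc 1 with ⟨h1x, h1y⟩ | ⟨h1y, h1x⟩
    · exact Or.inl (Or.inl (Or.inl ⟨⟨h0x, h1x⟩, ⟨h0y, h1y⟩⟩))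
    · exact Or.inl (Or.inl (Or.inr ⟨⟨h0x, h1x⟩, ⟨h0y, h1y⟩⟩))
    · exact Or.inl (Or.inr ⟨⟨h0x, h1x⟩, ⟨h0y, h1y⟩⟩)
    · exact Or.inr ⟨⟨h0x, h1x⟩, ⟨h0y, h1y⟩⟩
  have hprod : ∀ A B A' B' : Set ℝ, MeasurableSet A → MeasurableSet B →
      MeasurableSet A' → MeasurableSet B' →
      volume (cornerBox A B ×ˢ cornerBox A' B')
        = volume A * volume B * (volume A' * volume B') := by
    intro A B A' B' h1 h2 h3 h4
    rw [MeasureTheory.Measure.volume_eq_prod, Measure.prod_prod,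
      box_vol A B h1 h2, box_vol A' B' h3 h4]
  have heach : (ENNReal.ofReal t * ENNReal.ofReal t * (ENNReal.ofReal t * ENNReal.ofReal t))
      = ENNReal.ofReal (t ^ 4) := by
    rw [← ENNReal.ofReal_mul ht0.le, ← ENNReal.ofReal_mul (by positivity)]
    ring_nf
  calc volume _ ≤ volume ((cornerBox I0 I0 ×ˢ cornerBox I1 I1)
      ∪ (cornerBox I0 I1 ×ˢ cornerBox I1 I0) ∪
      (cornerBox I1 I0 ×ˢ cornerBox I0 I1) ∪ (cornerBox I1 I1 ×ˢ cornerBox I0 I0)) :=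
      measure_mono hsub
  _ ≤ volume (cornerBox I0 I0 ×ˢ cornerBox I1 I1) + volume (cornerBox I0 I1 ×ˢ cornerBox I1 I0) +
      volume (cornerBox I1 I0 ×ˢ cornerBox I0 I1) + volume (cornerBox I1 I1 ×ˢ cornerBox I0 I0) := by
      refine le_trans (measure_union_le _ _) ?_
      exact add_le_add (le_trans (measure_union_le _ _)
        (add_le_add (measure_union_le _ _) le_rfl)) le_rfl
  _ = ENNReal.ofReal (t ^ 4) + ENNReal.ofReal (t ^ 4) + ENNReal.ofReal (t ^ 4)
      + ENNReal.ofReal (t ^ 4) := by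
      rw [hprod _ _ _ _ hI0 hI0 hI1 hI1, hprod _ _ _ _ hI0 hI1 hI1 hI0,
        hprod _ _ _ _ hI1 hI0 hI0 hI1, hprod _ _ _ _ hI1 hI1 hI0 hI0,
        hvI0, hvI1, heach]
  _ ≤ ENNReal.ofReal (256 * α ^ 4 / n) := by
      rw [← ENNReal.ofReal_add (by positivity) (by positivity),
        ← ENNReal.ofReal_add (by positivity) (by positivity),
        ← ENNReal.ofReal_add (by positivity) (by positivity)]
      apply ENNReal.ofReal_le_ofReal
      have hpow : ((n:ℝ) ^ (-(1 : ℝ) / 4)) ^ (4:ℕ) = ((n:ℝ))⁻¹ := by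
        rw [← Real.rpow_natCast ((n:ℝ) ^ (-(1:ℝ)/4)) 4, ← Real.rpow_mul hnpos.le]
        norm_num
        exact Real.rpow_neg_one _
      have ht4 : t ^ 4 = 64 * α ^ 4 / n := by
        rw [htdef, hb, mul_pow, mul_pow, mul_pow, hpow]
        have h4 : Real.sqrt 2 ^ 4 = 4 := by
          rw [show (4:ℕ) = 2 * 2 by norm_num, pow_mul, Real.sq_sqrt (by norm_num)]; norm_num
        rw [h4]
        field_simp
        ring
      rw [ht4]
      apply le_of_eq
      ring
end

section
/- For every real d with 1.055 ≤ d ≤ √2, setting z = (1 − √(d² − 1))/2, one has 1 + z² ≤ d² (equivalently √(1 + z²) ≤ d). -/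
/-- For `1.055 ≤ d ≤ √2` and `z = (1 - √(d² - 1))/2`, one has `1 + z² ≤ d²`,
equivalently `√(1 + z²) ≤ d`: the maximum distance between two non-opposite
corner triangles does not exceed `d`. -/
theorem corner_triangle_dist_le (d : ℝ) (hd1 : 1.055 ≤ d) (hd2 : d ≤ Real.sqrt 2) :
    1 + ((1 - Real.sqrt (d ^ 2 - 1)) / 2) ^ 2 ≤ d ^ 2 ∧
      Real.sqrt (1 + ((1 - Real.sqrt (d ^ 2 - 1)) / 2) ^ 2) ≤ d := by
  have hd0 : (0:ℝ) ≤ d := by linarith [hd1]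
  set s := Real.sqrt (d ^ 2 - 1) with hs
  have hnn : (0:ℝ) ≤ d ^ 2 - 1 := by nlinarith
  have hs2 : s ^ 2 = d ^ 2 - 1 := Real.sq_sqrt hnn
  have hs0 : 0 ≤ s := Real.sqrt_nonneg _
  have hs3 : 1/3 ≤ s := by nlinarith
  have h1 : 1 + ((1 - s) / 2) ^ 2 ≤ d ^ 2 := by nlinarith
  refine ⟨h1, ?_⟩
  calc Real.sqrt (1 + ((1 - s) / 2) ^ 2) ≤ Real.sqrt (d ^ 2) := Real.sqrt_le_sqrt h1
    _ = d := Real.sqrt_sq hd0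
end

section
/- For every p ∈ [0,1) there exist λ > 0 and an integer n₀ such that for all even n ≥ n₀ with λ⁴ ≤ n the following holds: if X₁, …, Xₙ are independent uniform random points of [0,1]² (with X_{n+1} = X₁) and A₁, A₂, B₁, B₂ ⊆ [0,1]² are any measurable sets each of Lebesgue measure λ²/√n, then the probability that there exist indices i and j with (X_i ∈ A₁ and X_{i+1} ∈ A₂) and (X_j ∈ B₁ and X_{j+1} ∈ B₂) is greater than p. -/
open MeasureTheory ENNReal

def pairIdx0 {m : ℕ} (k : Fin m) : Fin (2 * m) := ⟨2 * k.val, by omega⟩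
def pairIdx1 {m : ℕ} (k : Fin m) : Fin (2 * m) := ⟨2 * k.val + 1, by omega⟩

def pairEquiv (m : ℕ) : (Fin m ⊕ Fin m) ≃ Fin (2 * m) where
  toFun := Sum.elim pairIdx0 pairIdx1
  invFun i := if h : i.val % 2 = 0 then Sum.inl ⟨i.val / 2, by omega⟩
    else Sum.inr ⟨i.val / 2, by omega⟩
  left_inv := by
    rintro (k | k) <;>
      simp only [Sum.elim_inl, Sum.elim_inr, pairIdx0, pairIdx1] <;>
      [refine (dif_pos ?_).trans ?_; refine (dif_neg ?_).trans ?_] <;>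
      simp [Fin.ext_iff] <;> omega
  right_inv := by
    intro i
    beta_reduce
    by_cases h : i.val % 2 = 0
    · rw [dif_pos h]
      simp only [Sum.elim_inl, pairIdx0, Fin.ext_iff]
      omega
    · rw [dif_neg h]
      simp only [Sum.elim_inr, pairIdx1, Fin.ext_iff]
      omega

theorem pair_fail_measure {α : Type*} [MeasurableSpace α] (μ : Measure α)
    [IsProbabilityMeasure μ] (m : ℕ) (A₁ A₂ : Set α)
    (h₁ : MeasurableSet A₁) (h₂ : MeasurableSet A₂) :
    Measure.pi (fun _ : Fin (2 * m) => μ)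
      {X : Fin (2 * m) → α | ∀ k : Fin m, ¬(X (pairIdx0 k) ∈ A₁ ∧ X (pairIdx1 k) ∈ A₂)}
      = (1 - μ A₁ * μ A₂) ^ m := by
  classical
  set D : Set (α × α) := (A₁ ×ˢ A₂)ᶜ with hD
  let e₁ := MeasurableEquiv.arrowProdEquivProdArrow α α (Fin m)
  let e₂ := (MeasurableEquiv.sumPiEquivProdPi (fun _ : Fin m ⊕ Fin m => α)).symm
  let e₃ := MeasurableEquiv.piCongrLeft (fun _ : Fin (2 * m) => α) (pairEquiv m)
  have he₁ : MeasurePreserving e₁ (Measure.pi fun _ : Fin m => μ.prod μ)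
      ((Measure.pi fun _ : Fin m => μ).prod (Measure.pi fun _ : Fin m => μ)) :=
    measurePreserving_arrowProdEquivProdArrow α α (Fin m) (fun _ => μ) (fun _ => μ)
  have he₂ : MeasurePreserving e₂
      ((Measure.pi fun _ : Fin m => μ).prod (Measure.pi fun _ : Fin m => μ))
      (Measure.pi fun _ : Fin m ⊕ Fin m => μ) :=
    measurePreserving_sumPiEquivProdPi_symm (fun _ => μ)
  have he₃ : MeasurePreserving e₃ (Measure.pi fun _ : Fin m ⊕ Fin m => μ)
      (Measure.pi fun _ : Fin (2 * m) => μ) :=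
    measurePreserving_piCongrLeft (fun _ => μ) (pairEquiv m)
  have hG := he₃.comp (he₂.comp he₁)
  have hFmeas : MeasurableSet
      {X : Fin (2 * m) → α | ∀ k : Fin m, ¬(X (pairIdx0 k) ∈ A₁ ∧ X (pairIdx1 k) ∈ A₂)} := by
    rw [show {X : Fin (2 * m) → α | ∀ k : Fin m, ¬(X (pairIdx0 k) ∈ A₁ ∧ X (pairIdx1 k) ∈ A₂)}
        = ⋂ k : Fin m, ((fun X : Fin (2 * m) → α => X (pairIdx0 k)) ⁻¹' A₁ ∩
          (fun X : Fin (2 * m) → α => X (pairIdx1 k)) ⁻¹' A₂)ᶜ by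
      ext X; simp]
    exact MeasurableSet.iInter fun k =>
      (((measurable_pi_apply _) h₁).inter ((measurable_pi_apply _) h₂)).compl
  rw [← hG.measure_preimage hFmeas.nullMeasurableSet]
  have hpre : (e₃ ∘ e₂ ∘ e₁) ⁻¹'
      {X : Fin (2 * m) → α | ∀ k : Fin m, ¬(X (pairIdx0 k) ∈ A₁ ∧ X (pairIdx1 k) ∈ A₂)}
      = Set.pi Set.univ (fun _ : Fin m => D) := by
    ext Y
    have key : ∀ k : Fin m,
        (e₃ (e₂ (e₁ Y))) (pairIdx0 k) = (Y k).1 ∧ (e₃ (e₂ (e₁ Y))) (pairIdx1 k) = (Y k).2 := by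
      intro k
      have h0 : pairIdx0 k = pairEquiv m (Sum.inl k) := by rfl
      have h1 : pairIdx1 k = pairEquiv m (Sum.inr k) := by rfl
      have he₁Y : e₁ Y = (fun c => (Y c).1, fun c => (Y c).2) := rfl
      rw [h0, h1, he₁Y]
      show (e₃ (e₂ _)) _ = _ ∧ (e₃ (e₂ _)) _ = _
      rw [show (e₂ ((fun c => (Y c).1, fun c => (Y c).2) : (Fin m → α) × (Fin m → α)))
          = (Equiv.sumPiEquivProdPi (fun _ : Fin m ⊕ Fin m => α)).symm
            (fun c => (Y c).1, fun c => (Y c).2) from rfl]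
      constructor
      · show (MeasurableEquiv.piCongrLeft (fun _ : Fin (2 * m) => α) (pairEquiv m)) _ _ = _
        rw [MeasurableEquiv.coe_piCongrLeft]
        exact Equiv.piCongrLeft_sumInl (fun _ => α) (pairEquiv m) _ _ k
      · show (MeasurableEquiv.piCongrLeft (fun _ : Fin (2 * m) => α) (pairEquiv m)) _ _ = _
        rw [MeasurableEquiv.coe_piCongrLeft]
        exact Equiv.piCongrLeft_sumInr (fun _ => α) (pairEquiv m) _ _ k
    simp only [Set.mem_preimage, Function.comp_apply, Set.mem_setOf_eq, Set.mem_pi,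
      Set.mem_univ, forall_true_left, hD, Set.mem_compl_iff, Set.mem_prod]
    constructor
    · intro h k; have := h k; rw [(key k).1, (key k).2] at this; exact this
    · intro h k; rw [(key k).1, (key k).2]; exact h k
  rw [hpre, Measure.pi_pi]
  have hDm : (μ.prod μ) D = 1 - μ A₁ * μ A₂ := by
    rw [hD, prob_compl_eq_one_sub (h₁.prod h₂), Measure.prod_prod]
  rw [hDm, Finset.prod_const, Finset.card_univ, Fintype.card_fin]

/-- For every `p ∈ [0,1)` there are `λ > 0` and `n₀` such that for every even
`n ≥ n₀` with `λ⁴ ≤ n` and all measurable subsets `A₁, A₂, B₁, B₂` of the unit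
square each of measure `λ²/√n`, the probability that the cyclic tour through
`n` i.i.d. uniform points of the unit square contains both an `A₁ → A₂` edge
and a `B₁ → B₂` edge (a D-cross) is greater than `p`. -/
theorem prob_D_cross_gt (p : ℝ) (hp0 : 0 ≤ p) (hp1 : p < 1) :
    ∃ lam : ℝ, 0 < lam ∧ ∃ n₀ : ℕ,
      ∀ (n : ℕ) [NeZero n], n₀ ≤ n → Even n → lam ^ 4 ≤ (n : ℝ) →
        ∀ A₁ A₂ B₁ B₂ : Set (EuclideanSpace ℝ (Fin 2)),
          A₁ ⊆ {x | ∀ i, x i ∈ Set.Icc (0 : ℝ) 1} →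
          A₂ ⊆ {x | ∀ i, x i ∈ Set.Icc (0 : ℝ) 1} →
          B₁ ⊆ {x | ∀ i, x i ∈ Set.Icc (0 : ℝ) 1} →
          B₂ ⊆ {x | ∀ i, x i ∈ Set.Icc (0 : ℝ) 1} →
          MeasurableSet A₁ → MeasurableSet A₂ →
          MeasurableSet B₁ → MeasurableSet B₂ →
          volume A₁ = ENNReal.ofReal (lam ^ 2 / Real.sqrt n) →
          volume A₂ = ENNReal.ofReal (lam ^ 2 / Real.sqrt n) →
          volume B₁ = ENNReal.ofReal (lam ^ 2 / Real.sqrt n) →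
          volume B₂ = ENNReal.ofReal (lam ^ 2 / Real.sqrt n) →
          ENNReal.ofReal p <
            Measure.pi (fun _ : Fin n =>
                volume.restrict {x : EuclideanSpace ℝ (Fin 2) | ∀ i, x i ∈ Set.Icc (0 : ℝ) 1})
              {X : Fin n → EuclideanSpace ℝ (Fin 2) |
                (∃ i : Fin n, X i ∈ A₁ ∧ X (i + 1) ∈ A₂) ∧
                  (∃ j : Fin n, X j ∈ B₁ ∧ X (j + 1) ∈ B₂)} := by
  classical
  -- choice of lam
  have h1p : (0:ℝ) < 1 - p := by linarith
  have h41 : (1:ℝ) < 4 / (1 - p) := by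
    rw [lt_div_iff₀ h1p]; linarith
  set L : ℝ := 2 * Real.log (4 / (1 - p)) with hLdef
  have hL : 0 < L := by
    have := Real.log_pos h41
    positivity
  refine ⟨L ^ ((4:ℝ)⁻¹), Real.rpow_pos_of_pos hL _, 2, ?_⟩
  set lam : ℝ := L ^ ((4:ℝ)⁻¹) with hlamdef
  have hlampos : 0 < lam := Real.rpow_pos_of_pos hL _
  have hlam4 : lam ^ 4 = L := by
    rw [hlamdef, ← Real.rpow_natCast (L ^ ((4:ℝ)⁻¹)) 4, ← Real.rpow_mul hL.le]
    norm_num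
  have hexp : Real.exp (-(lam ^ 4 / 2)) = (1 - p) / 4 := by
    rw [hlam4, hLdef]
    rw [show -(2 * Real.log (4 / (1 - p)) / 2) = -Real.log (4 / (1 - p)) by ring]
    rw [Real.exp_neg, Real.exp_log (by positivity), inv_div]
  intro n _ hn2 hEven hlamn A₁ A₂ B₁ B₂ hA₁S hA₂S hB₁S hB₂S hmA₁ hmA₂ hmB₁ hmB₂ hvA₁ hvA₂ hvB₁ hvB₂
  obtain ⟨m, hm⟩ := hEven
  have hm2 : n = 2 * m := by omega
  subst hm2
  have hm0 : m ≠ 0 := by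
    have h := NeZero.ne (2 * m)
    omega
  -- the base space and measure
  set S : Set (EuclideanSpace ℝ (Fin 2)) := {x | ∀ i, x i ∈ Set.Icc (0 : ℝ) 1} with hSdef
  have hSpre : S = (MeasurableEquiv.toLp 2 (Fin 2 → ℝ)).symm ⁻¹'
      (Set.pi Set.univ fun _ : Fin 2 => Set.Icc (0:ℝ) 1) := by
    ext x
    simp [hSdef, Set.mem_pi, MeasurableEquiv.coe_toLp_symm, Set.mem_Icc, Pi.le_def,
      MeasurableEquiv.toLp_symm_apply, forall_and]
  have hboxmeas : MeasurableSet (Set.pi Set.univ fun _ : Fin 2 => Set.Icc (0:ℝ) 1) :=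
    MeasurableSet.univ_pi fun _ => measurableSet_Icc
  have hSmeas : MeasurableSet S := by
    rw [hSpre]; exact (MeasurableEquiv.toLp 2 (Fin 2 → ℝ)).symm.measurable hboxmeas
  have hSvol : volume S = 1 := by
    rw [hSpre,
      (EuclideanSpace.volume_preserving_symm_measurableEquiv_toLp (Fin 2)).measure_preimage
        hboxmeas.nullMeasurableSet]
    rw [volume_pi_pi]
    simp [Real.volume_Icc]
  set μ : Measure (EuclideanSpace ℝ (Fin 2)) := volume.restrict S with hμdef
  haveI hμprob : IsProbabilityMeasure μ := ⟨by
    rw [hμdef, Measure.restrict_apply_univ, hSvol]⟩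
  have hres : ∀ (A : Set (EuclideanSpace ℝ (Fin 2))), MeasurableSet A → A ⊆ S → μ A = volume A := by
    intro A hA hAS
    rw [hμdef, Measure.restrict_apply hA, Set.inter_eq_self_of_subset_left hAS]
  -- the numbers
  have hnpos : (0:ℝ) < ((2 * m : ℕ) : ℝ) := by
    have : 0 < 2 * m := by omega
    exact_mod_cast this
  set q : ℝ := lam ^ 2 / Real.sqrt ((2 * m : ℕ) : ℝ) with hqdef
  set t : ℝ := lam ^ 4 / ((2 * m : ℕ) : ℝ) with htdef
  have hqq : q * q = t := by
    rw [hqdef, htdef, div_mul_div_comm, Real.mul_self_sqrt hnpos.le]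
    congr 1
    ring
  have ht0 : 0 ≤ t := by
    rw [htdef]; positivity
  have ht1 : t ≤ 1 := by
    rw [htdef, div_le_one hnpos]; exact hlamn
  have hq0 : 0 ≤ q := by rw [hqdef]; positivity
  -- measure of the sets under μ
  have hμA₁ : μ A₁ = ENNReal.ofReal q := by rw [hres A₁ hmA₁ hA₁S, hvA₁]
  have hμA₂ : μ A₂ = ENNReal.ofReal q := by rw [hres A₂ hmA₂ hA₂S, hvA₂]
  have hμB₁ : μ B₁ = ENNReal.ofReal q := by rw [hres B₁ hmB₁ hB₁S, hvB₁]
  have hμB₂ : μ B₂ = ENNReal.ofReal q := by rw [hres B₂ hmB₂ hB₂S, hvB₂]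
  -- real-side bound for the failure probability
  have hfail_real : (1 - t) ^ m ≤ (1 - p) / 4 := by
    have hstep : 1 - t ≤ Real.exp (-t) := by
      have := Real.add_one_le_exp (-t)
      linarith
    have hpow : (1 - t) ^ m ≤ Real.exp (-t) ^ m :=
      pow_le_pow_left₀ (by linarith) hstep m
    have hexpm : Real.exp (-t) ^ m = Real.exp (-(lam ^ 4 / 2)) := by
      rw [← Real.exp_nat_mul]
      congr 1
      rw [htdef]
      have hmne : ((m:ℝ)) ≠ 0 := by exact_mod_cast hm0
      push_cast
      field_simp
    rw [hexpm, hexp] at hpow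
    exact hpow
  -- the failure events
  set P : Measure (Fin (2 * m) → EuclideanSpace ℝ (Fin 2)) := Measure.pi (fun _ => μ) with hPdef
  haveI : IsProbabilityMeasure P := by
    rw [hPdef]; infer_instance
  set T : Set (Fin (2 * m) → EuclideanSpace ℝ (Fin 2)) :=
    {X | (∃ i : Fin (2 * m), X i ∈ A₁ ∧ X (i + 1) ∈ A₂) ∧
      (∃ j : Fin (2 * m), X j ∈ B₁ ∧ X (j + 1) ∈ B₂)} with hTdef
  set FA : Set (Fin (2 * m) → EuclideanSpace ℝ (Fin 2)) :=
    {X | ∀ k : Fin m, ¬(X (pairIdx0 k) ∈ A₁ ∧ X (pairIdx1 k) ∈ A₂)} with hFAdef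
  set FB : Set (Fin (2 * m) → EuclideanSpace ℝ (Fin 2)) :=
    {X | ∀ k : Fin m, ¬(X (pairIdx0 k) ∈ B₁ ∧ X (pairIdx1 k) ∈ B₂)} with hFBdef
  have hpair : ∀ k : Fin m, (pairIdx0 k : Fin (2 * m)) + 1 = pairIdx1 k := by
    intro k
    apply Fin.ext
    rw [Fin.add_def]
    simp only [pairIdx0, pairIdx1, Fin.val_one']
    rw [Nat.mod_eq_of_lt (by omega : (1:ℕ) < 2 * m), Nat.mod_eq_of_lt (by omega)]
  have hsub : Tᶜ ⊆ FA ∪ FB := by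
    intro X hX
    rw [Set.mem_compl_iff, hTdef, Set.mem_setOf_eq] at hX
    rcases not_and_or.mp hX with h | h
    · left
      intro k
      have := not_exists.mp h (pairIdx0 k)
      rwa [hpair k] at this
    · right
      intro k
      have := not_exists.mp h (pairIdx0 k)
      rwa [hpair k] at this
  -- bounding the failure probability in ENNReal
  have h1t : (1 : ℝ≥0∞) - ENNReal.ofReal t = ENNReal.ofReal (1 - t) := by
    rw [ENNReal.ofReal_sub 1 ht0, ENNReal.ofReal_one]
  have hfailA : P FA = ENNReal.ofReal ((1 - t) ^ m) := by
    rw [hPdef, hFAdef, pair_fail_measure μ m A₁ A₂ hmA₁ hmA₂, hμA₁, hμA₂,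
      ← ENNReal.ofReal_mul hq0, hqq, h1t, ← ENNReal.ofReal_pow (by linarith)]
  have hfailB : P FB = ENNReal.ofReal ((1 - t) ^ m) := by
    rw [hPdef, hFBdef, pair_fail_measure μ m B₁ B₂ hmB₁ hmB₂, hμB₁, hμB₂,
      ← ENNReal.ofReal_mul hq0, hqq, h1t, ← ENNReal.ofReal_pow (by linarith)]
  have hTc : P Tᶜ ≤ ENNReal.ofReal ((1 - p) / 2) := by
    calc P Tᶜ ≤ P (FA ∪ FB) := measure_mono hsub
      _ ≤ P FA + P FB := measure_union_le _ _
      _ = ENNReal.ofReal ((1 - t) ^ m) + ENNReal.ofReal ((1 - t) ^ m) := by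
          rw [hfailA, hfailB]
      _ = ENNReal.ofReal ((1 - t) ^ m + (1 - t) ^ m) := by
          rw [ENNReal.ofReal_add (pow_nonneg (by linarith) m) (pow_nonneg (by linarith) m)]
      _ ≤ ENNReal.ofReal ((1 - p) / 2) := by
          apply ENNReal.ofReal_le_ofReal
          linarith [hfail_real]
  have huniv : (1 : ℝ≥0∞) ≤ P T + P Tᶜ := by
    have h := measure_union_le (μ := P) T Tᶜ
    rw [Set.union_compl_self, measure_univ] at h
    exact h
  have hPTlb : ENNReal.ofReal ((1 + p) / 2) ≤ P T := by
    have h1 : (1 : ℝ≥0∞) - ENNReal.ofReal ((1 - p) / 2) = ENNReal.ofReal ((1 + p) / 2) := by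
      rw [show (1 + p) / 2 = 1 - (1 - p) / 2 by ring, ENNReal.ofReal_sub 1 (by linarith),
        ENNReal.ofReal_one]
    calc ENNReal.ofReal ((1 + p) / 2)
        = 1 - ENNReal.ofReal ((1 - p) / 2) := h1.symm
      _ ≤ 1 - P Tᶜ := tsub_le_tsub_left hTc 1
      _ ≤ P T := tsub_le_iff_right.mpr huniv
  refine lt_of_lt_of_le ?_ hPTlb
  rw [ENNReal.ofReal_lt_ofReal_iff (by linarith)]
  linarith
end

section
/- Fix α > 0 and set δₙ = √2 − α·n^{−1/4}. Let P₁, …, Pₙ be independent random points each uniformly distributed on the unit square [0,1]², with cyclic convention P_{n+1} = P₁. Then there exist a constant C > 0 and an integer n₀ such that for all n ≥ n₀, E[#{k ∈ {1,…,n} : ‖P_k − P_{k+1}‖ > δₙ}] ≤ C. -/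
open MeasureTheory Set

lemma mset_pi2 (B : Set ℝ) (hB : MeasurableSet B) :
    MeasurableSet {x : EuclideanSpace ℝ (Fin 2) | ∀ i, x i ∈ B} := by
  have h : {x : EuclideanSpace ℝ (Fin 2) | ∀ i, x i ∈ B}
      = ⋂ i, (fun x : EuclideanSpace ℝ (Fin 2) => x i) ⁻¹' B := by
    ext x; simp [Set.mem_iInter]
  rw [h]
  exact MeasurableSet.iInter fun i =>
    ((measurable_pi_apply i).comp (MeasurableEquiv.toLp 2 (Fin 2 → ℝ)).symm.measurable) hB

lemma vol_pi2 (B : Set ℝ) :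
    volume {x : EuclideanSpace ℝ (Fin 2) | ∀ i, x i ∈ B} = (volume B) ^ 2 := by
  have h : {x : EuclideanSpace ℝ (Fin 2) | ∀ i, x i ∈ B}
      = (MeasurableEquiv.toLp 2 (Fin 2 → ℝ)).symm ⁻¹' (Set.univ.pi fun _ => B) := by
    ext x; simp [Set.mem_pi]
  rw [h, (EuclideanSpace.volume_preserving_symm_measurableEquiv_toLp (Fin 2)).measure_preimage_equiv]
  rw [volume_pi_pi]
  simp [sq]

lemma corner_mem (ε : ℝ) (hε : 0 < ε) (x y : EuclideanSpace ℝ (Fin 2))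
    (hx : ∀ i, x i ∈ Set.Icc (0:ℝ) 1) (hy : ∀ i, y i ∈ Set.Icc (0:ℝ) 1)
    (hd : Real.sqrt 2 - ε < dist x y) (i : Fin 2) :
    x i ∈ Set.Icc (0:ℝ) (2*Real.sqrt 2*ε) ∪ Set.Icc (1 - 2*Real.sqrt 2*ε) 1 := by
  set τ := 2*Real.sqrt 2*ε with hτ
  by_cases h1 : 1 ≤ τ
  · exact Or.inl ⟨(hx i).1, le_trans (hx i).2 h1⟩
  push_neg at h1
  have hs2 : Real.sqrt 2 ^ 2 = 2 := Real.sq_sqrt (by norm_num)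
  have hs2pos : (1:ℝ) ≤ Real.sqrt 2 := by nlinarith [Real.sqrt_nonneg 2]
  have hεpos : 0 ≤ ε := le_of_lt hε
  have hτ0 : 0 ≤ τ := by positivity
  have hdist : dist x y ^ 2 = ∑ j, dist (x j) (y j) ^ 2 := by
    rw [EuclideanSpace.dist_eq]
    rw [Real.sq_sqrt (Finset.sum_nonneg fun j _ => sq_nonneg _)]
  have hsum : dist x y ^ 2 = dist (x 0) (y 0) ^ 2 + dist (x 1) (y 1) ^ 2 := by
    rw [hdist, Fin.sum_univ_two]
  have habs : ∀ j : Fin 2, dist (x j) (y j) = |x j - y j| := fun j => Real.dist_eq _ _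
  have hb : ∀ j : Fin 2, dist (x j) (y j) ≤ 1 := by
    intro j
    rw [habs j, abs_le]
    constructor <;> [nlinarith [(hx j).1, (hy j).2]; nlinarith [(hx j).2, (hy j).1]]
  have hd0 : ∀ j : Fin 2, 0 ≤ dist (x j) (y j) := fun j => dist_nonneg
  have hdpos : 0 < Real.sqrt 2 - ε := by nlinarith
  have hd2 : dist x y ^ 2 > 2 - τ := by
    have : (Real.sqrt 2 - ε)^2 ≤ dist x y ^2 := by nlinarith [dist_nonneg (x := x) (y := y)]
    nlinarith
  have hi : dist (x i) (y i) ^ 2 > 1 - τ := by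
    have h01 : i = 0 ∨ i = 1 := by omega
    rcases h01 with rfl | rfl <;> nlinarith [hb 0, hb 1, hd0 0, hd0 1]
  have hgt : |x i - y i| > 1 - τ := by
    rw [← habs i]
    nlinarith [hd0 i, hi]
  rcases abs_cases (x i - y i) with ⟨he, _⟩ | ⟨he, _⟩
  · right; exact ⟨by nlinarith [(hy i).1], (hx i).2⟩
  · left; exact ⟨(hx i).1, by nlinarith [(hy i).2]⟩

lemma edge_prob_bound (n : ℕ) [NeZero n] (hn : 2 ≤ n) (k : Fin n) (ε : ℝ) (hε : 0 < ε) :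
    (Measure.pi fun _ : Fin n =>
        volume.restrict {x : EuclideanSpace ℝ (Fin 2) | ∀ i, x i ∈ Set.Icc (0:ℝ) 1})
      {P : Fin n → EuclideanSpace ℝ (Fin 2) | Real.sqrt 2 - ε < dist (P k) (P (k+1))}
      ≤ ENNReal.ofReal (4 * Real.sqrt 2 * ε) ^ 4 := by
  classical
  set S : Set (EuclideanSpace ℝ (Fin 2)) := {x | ∀ i, x i ∈ Set.Icc (0:ℝ) 1} with hS
  set B : Set ℝ := Set.Icc (0:ℝ) (2*Real.sqrt 2*ε) ∪ Set.Icc (1 - 2*Real.sqrt 2*ε) 1 with hB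
  set A : Set (EuclideanSpace ℝ (Fin 2)) := {x | ∀ i, x i ∈ B} with hA
  set μ := Measure.pi fun _ : Fin n => volume.restrict S with hμ
  set c := ENNReal.ofReal (4 * Real.sqrt 2 * ε) ^ 2 with hc
  set E := {P : Fin n → EuclideanSpace ℝ (Fin 2) | Real.sqrt 2 - ε < dist (P k) (P (k+1))}
    with hE
  have hSm : MeasurableSet S := mset_pi2 _ measurableSet_Icc
  have hBm : MeasurableSet B := measurableSet_Icc.union measurableSet_Icc
  have hAm : MeasurableSet A := mset_pi2 _ hBm
  have hvolS : volume S = 1 := by rw [hS, vol_pi2]; simp [Real.volume_Icc]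
  have hvolB : volume B ≤ ENNReal.ofReal (4 * Real.sqrt 2 * ε) := by
    refine le_trans (measure_union_le _ _) ?_
    rw [Real.volume_Icc, Real.volume_Icc]
    rw [← ENNReal.ofReal_add (by nlinarith [Real.sqrt_nonneg 2]) (by nlinarith [Real.sqrt_nonneg 2])]
    apply ENNReal.ofReal_le_ofReal
    nlinarith [Real.sqrt_nonneg 2]
  have hvolA : volume A ≤ c := by
    rw [hA, vol_pi2]; exact pow_le_pow_left' hvolB 2
  have hP1 : IsProbabilityMeasure (volume.restrict S) :=
    ⟨by rw [Measure.restrict_apply_univ]; exact hvolS⟩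
  haveI hprob : ∀ _ : Fin n, IsProbabilityMeasure (volume.restrict S) := fun _ => hP1
  set T : Set (Fin n → EuclideanSpace ℝ (Fin 2)) := Set.univ.pi fun _ => S with hT
  have hTm : MeasurableSet T := MeasurableSet.univ_pi fun _ => hSm
  have hμT : μ T = 1 := by
    rw [hT, Measure.pi_pi]
    simp [Measure.restrict_apply hSm, hvolS]
  have hμTc : μ Tᶜ = 0 := by
    haveI : IsProbabilityMeasure μ := Measure.pi.instIsProbabilityMeasure _
    rw [measure_compl hTm (measure_ne_top _ _), hμT, measure_univ]
    simp
  have hk : k + 1 ≠ k := by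
    intro h
    have h1 : (1 : Fin n) = 0 := add_left_cancel (a := k) (b := (1:Fin n)) (c := 0)
      (by simpa using h)
    rw [Fin.one_eq_zero_iff] at h1
    omega
  set t : Fin n → Set (EuclideanSpace ℝ (Fin 2)) := fun i => if i = k ∨ i = k+1 then A else S
    with ht
  have hincl : E ∩ T ⊆ Set.univ.pi t := by
    rintro P ⟨hP, hPT⟩ i -
    have hmem : ∀ j, P j ∈ S := fun j => hPT j (Set.mem_univ j)
    have h1 : P k ∈ A := fun j =>
      corner_mem ε hε (P k) (P (k+1)) (hmem k) (hmem (k+1)) hP j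
    have h2 : P (k+1) ∈ A := fun j =>
      corner_mem ε hε (P (k+1)) (P k) (hmem (k+1)) (hmem k)
        (by rw [dist_comm]; exact hP) j
    simp only [ht]
    split_ifs with h
    · rcases h with h | h
      · rw [h]; exact h1
      · rw [h]; exact h2
    · exact hmem i
  calc μ E ≤ μ (E ∩ T) + μ Tᶜ := by
        refine le_trans (measure_mono ?_) (measure_union_le _ _)
        intro P hP
        by_cases h : P ∈ T
        · exact Or.inl ⟨hP, h⟩
        · exact Or.inr h
    _ = μ (E ∩ T) := by rw [hμTc, add_zero]
    _ ≤ μ (Set.univ.pi t) := measure_mono hincl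
    _ = ∏ i, (volume.restrict S) (t i) := Measure.pi_pi _ _
    _ ≤ ∏ i : Fin n, ((if i = k then c else 1) * (if i = k+1 then c else 1)) := by
        refine Finset.prod_le_prod' fun i _ => ?_
        simp only [ht]
        by_cases h1 : i = k
        · subst h1
          have h2 : ¬ i = i + 1 := fun h2 => hk h2.symm
          rw [if_pos (Or.inl rfl), if_pos rfl, if_neg h2, mul_one,
            Measure.restrict_apply hAm]
          exact le_trans (measure_mono Set.inter_subset_left) hvolA
        · by_cases h2 : i = k + 1
          · subst h2
            rw [if_pos (Or.inr rfl), if_neg hk, if_pos rfl, one_mul,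
              Measure.restrict_apply hAm]
            exact le_trans (measure_mono Set.inter_subset_left) hvolA
          · have h3 : ¬ (i = k ∨ i = k + 1) := by tauto
            rw [if_neg h3, if_neg h1, if_neg h2, Measure.restrict_apply hSm,
              Set.inter_self, hvolS, mul_one]
    _ = c * c := by
        rw [Finset.prod_mul_distrib]
        rw [Finset.prod_ite_eq' Finset.univ k fun _ => c]
        rw [Finset.prod_ite_eq' Finset.univ (k+1) fun _ => c]
        simp
    _ = ENNReal.ofReal (4 * Real.sqrt 2 * ε) ^ 4 := by rw [hc]; ring

/-- For `P₁, …, Pₙ` i.i.d. uniform points of the unit square visited in cyclic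
order and threshold `δₙ = √2 - α n^{-1/4}`, the expected number of tour edges
longer than `δₙ` is bounded by a constant: there are `C > 0` and `n₀` such that
for all `n ≥ n₀` the expectation is at most `C`. -/
theorem expected_num_large_euclidean (α : ℝ) (hα : 0 < α) :
    ∃ C : ℝ, 0 < C ∧ ∃ n₀ : ℕ, ∀ (n : ℕ) [NeZero n], n₀ ≤ n →
      ∫ P : Fin n → EuclideanSpace ℝ (Fin 2),
          ((Set.ncard {k : Fin n |
              Real.sqrt 2 - α * (n : ℝ) ^ (-(1 : ℝ) / 4) < dist (P k) (P (k + 1))}) : ℝ)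
          ∂(Measure.pi fun _ : Fin n =>
              volume.restrict {x : EuclideanSpace ℝ (Fin 2) | ∀ i, x i ∈ Set.Icc (0 : ℝ) 1}) ≤
        C := by
  classical
  refine ⟨1024 * α ^ 4, by positivity, 2, ?_⟩
  intro n _ hn
  set S : Set (EuclideanSpace ℝ (Fin 2)) := {x | ∀ i, x i ∈ Set.Icc (0:ℝ) 1} with hS
  set μ := Measure.pi fun _ : Fin n => volume.restrict S with hμ
  set ε := α * (n : ℝ) ^ (-(1 : ℝ) / 4) with hε
  have hnpos : (0:ℝ) < n := by positivity
  have hεpos : 0 < ε := by positivity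
  have hSm : MeasurableSet S := mset_pi2 _ measurableSet_Icc
  have hvolS : volume S = 1 := by rw [hS, vol_pi2]; simp [Real.volume_Icc]
  have hP1 : IsProbabilityMeasure (volume.restrict S) :=
    ⟨by rw [Measure.restrict_apply_univ]; exact hvolS⟩
  haveI hprob : ∀ _ : Fin n, IsProbabilityMeasure (volume.restrict S) := fun _ => hP1
  haveI : IsProbabilityMeasure μ := Measure.pi.instIsProbabilityMeasure _
  set Ek : Fin n → Set (Fin n → EuclideanSpace ℝ (Fin 2)) :=
    fun k => {P | Real.sqrt 2 - ε < dist (P k) (P (k+1))} with hEk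
  have hEkm : ∀ k, MeasurableSet (Ek k) := by
    intro k
    exact measurableSet_lt measurable_const
      ((measurable_pi_apply k).dist (measurable_pi_apply (k+1)))
  have hcount : ∀ P : Fin n → EuclideanSpace ℝ (Fin 2),
      ((Set.ncard {k : Fin n | Real.sqrt 2 - ε < dist (P k) (P (k + 1))}) : ℝ)
      = ∑ k : Fin n, (Ek k).indicator (fun _ => (1:ℝ)) P := by
    intro P
    rw [Set.ncard_eq_toFinset_card', Set.toFinset_setOf, Finset.card_filter]
    push_cast
    refine Finset.sum_congr rfl fun k _ => ?_
    rw [Set.indicator_apply]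
    simp [hEk]
  rw [show (fun P : Fin n → EuclideanSpace ℝ (Fin 2) =>
      ((Set.ncard {k : Fin n | Real.sqrt 2 - ε < dist (P k) (P (k + 1))}) : ℝ))
      = fun P => ∑ k : Fin n, (Ek k).indicator (fun _ => (1:ℝ)) P from funext hcount]
  rw [integral_finset_sum _ fun k _ => (integrable_indicator_iff (hEkm k)).2
    (integrableOn_const (measure_ne_top μ _))]
  have hone : ∀ k : Fin n, ∫ P, (Ek k).indicator (fun _ => (1:ℝ)) P ∂μ = (μ (Ek k)).toReal := by
    intro k
    rw [integral_indicator (hEkm k)]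
    simp [Measure.restrict_apply_univ, Measure.real]
  have hbound : ∀ k : Fin n, (μ (Ek k)).toReal ≤ 1024 * α ^ 4 / n := by
    intro k
    have h := edge_prob_bound n hn k ε hεpos
    have hval : (4 * Real.sqrt 2 * ε) ^ 4 = 1024 * α ^ 4 / n := by
      have h2 : Real.sqrt 2 ^ 2 = 2 := Real.sq_sqrt (by norm_num)
      have h4 : ((n:ℝ) ^ (-(1 : ℝ) / 4)) ^ (4:ℕ) = ((n:ℝ))⁻¹ := by
        rw [← Real.rpow_natCast ((n:ℝ) ^ (-(1 : ℝ) / 4)) 4, ← Real.rpow_mul (le_of_lt hnpos)]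
        norm_num
        exact Real.rpow_neg_one _
      have : (4 * Real.sqrt 2 * ε) ^ 4
          = 4^4 * (Real.sqrt 2 ^ 2)^2 * α^4 * ((n:ℝ) ^ (-(1 : ℝ) / 4)) ^ (4:ℕ) := by
        rw [hε]; ring
      rw [this, h4, h2]
      field_simp
      ring
    have h5 : ENNReal.ofReal (4 * Real.sqrt 2 * ε) ^ 4
        = ENNReal.ofReal ((4 * Real.sqrt 2 * ε) ^ 4) := by
      rw [ENNReal.ofReal_pow (by positivity)]
    rw [h5, hval] at h
    calc (μ (Ek k)).toReal ≤ (ENNReal.ofReal (1024 * α ^ 4 / n)).toReal :=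
          ENNReal.toReal_mono ENNReal.ofReal_ne_top h
      _ = 1024 * α ^ 4 / n := ENNReal.toReal_ofReal (by positivity)
  calc ∑ k : Fin n, ∫ P, (Ek k).indicator (fun _ => (1:ℝ)) P ∂μ
      ≤ ∑ _k : Fin n, (1024 * α ^ 4 / n) := by
        refine Finset.sum_le_sum fun k _ => ?_
        rw [hone k]; exact hbound k
    _ = 1024 * α ^ 4 := by
        rw [Finset.sum_const, Finset.card_univ, Fintype.card_fin, nsmul_eq_mul]
        field_simp
end
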